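/- Let n₁, n₂, n₃ ≥ 1, let Z be a positive semidefinite matrix on ℂ^{n₁} and Θ a positive semidefinite matrix on ℂ^{n₃}. (i) For all unit vectors μ ∈ ℂ^{n₁}⊗ℂ^{n₂} and ν ∈ ℂ^{n₂}⊗ℂ^{n₃}, the trace Tr[ (|μ⟩⟨μ| ⊗ Θ) (Z ⊗ |ν⟩⟨ν|) ] of operators on ℂ^{n₁}⊗ℂ^{n₂}⊗ℂ^{n₃} is at most λ_max(Z)·λ_max(Θ), where λ_max denotes the largest eigenvalue. (ii) Equality holds for μ = e₁⊗ξ and ν = ξ⊗e₃, where e₁ is any unit eigenvector of Z with eigenvalue λ_max(Z), e₃ is any unit eigenvector of Θ with eigenvalue λ_max(Θ), and ξ is any unit vector in ℂ^{n₂}. -/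

import Mathlib

open Matrix ComplexOrder

/-- The operator |μ⟩⟨μ| ⊗ Θ on ℂ^{n₁}⊗ℂ^{n₂}⊗ℂ^{n₃}. -/
noncomputable def opA {n₁ n₂ n₃ : ℕ} (μ : Fin n₁ × Fin n₂ → ℂ)
    (Θ : Matrix (Fin n₃) (Fin n₃) ℂ) :
    Matrix (Fin n₁ × Fin n₂ × Fin n₃) (Fin n₁ × Fin n₂ × Fin n₃) ℂ :=
  Matrix.of fun p q =>
    μ (p.1, p.2.1) * (starRingEnd ℂ) (μ (q.1, q.2.1)) * Θ p.2.2 q.2.2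

/-- The operator Z ⊗ |ν⟩⟨ν| on ℂ^{n₁}⊗ℂ^{n₂}⊗ℂ^{n₃}. -/
noncomputable def opB {n₁ n₂ n₃ : ℕ} (Z : Matrix (Fin n₁) (Fin n₁) ℂ)
    (ν : Fin n₂ × Fin n₃ → ℂ) :
    Matrix (Fin n₁ × Fin n₂ × Fin n₃) (Fin n₁ × Fin n₂ × Fin n₃) ℂ :=
  Matrix.of fun p q =>
    Z p.1 q.1 * ν (p.2.1, p.2.2) * (starRingEnd ℂ) (ν (q.2.1, q.2.2))

/-!
With `v i k = ∑ j, μ (i, j) * conj (ν (j, k))`, the trace is the quadratic form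
`⟪v, (Z ⊗ Θᵀ) v⟫`. The operator inequality `Z ⊗ Θᵀ ≤ λ_max(Z) λ_max(Θ)` follows from
`λ_max(Z) λ_max(Θ) - Z ⊗ Θᵀ = (λ_max(Z) - Z) ⊗ Θᵀ + λ_max(Z) ⊗ (λ_max(Θ) - Θᵀ)`,
a sum of Kronecker products of positive semidefinite matrices, and Cauchy–Schwarz gives
`‖v‖ ≤ ‖μ‖ ‖ν‖ = 1`. For `μ = e₁ ⊗ ξ` and `ν = ξ ⊗ e₃` the vector `v` is the unit vector
`e₁ ⊗ conj e₃`, an eigenvector of `Z ⊗ Θᵀ` for the eigenvalue `λ_max(Z) λ_max(Θ)`.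
-/

open Kronecker

namespace Matrix

variable {𝕜 ι κ : Type*} [Fintype ι] [Fintype κ]

open scoped MatrixOrder in
theorem IsHermitian.posSemidef_smul_one_sub [RCLike 𝕜] [DecidableEq ι] {A : Matrix ι ι 𝕜}
    (hA : A.IsHermitian) {c : ℝ}
    (hc : ∀ (v : ι → 𝕜) (x : ℝ), v ≠ 0 → A *ᵥ v = (x : 𝕜) • v → x ≤ c) :
    ((c : 𝕜) • 1 - A).PosSemidef := by
  have hspec : ∀ x ∈ spectrum ℝ A, x ≤ c := by
    rw [hA.spectrum_real_eq_range_eigenvalues]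
    rintro _ ⟨i, rfl⟩
    refine hc _ _ (fun h => hA.eigenvectorBasis.orthonormal.ne_zero i
      (WithLp.ofLp_injective 2 h)) ?_
    rw [hA.mulVec_eigenvectorBasis, RCLike.real_smul_eq_coe_smul (K := 𝕜)]
  have := le_algebraMap_of_spectrum_le hspec hA.isSelfAdjoint
  rwa [le_iff, Algebra.algebraMap_eq_smul_one, RCLike.real_smul_eq_coe_smul (K := 𝕜)] at this

theorem star_dotProduct_self_eq_sum_normSq (v : ι → ℂ) :
    star v ⬝ᵥ v = ((∑ i, Complex.normSq (v i) : ℝ) : ℂ) := by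
  simp only [dotProduct, Pi.star_apply, Complex.star_def, Complex.ofReal_sum,
    Complex.normSq_eq_conj_mul_self]

theorem PosSemidef.nonneg_of_mulVec_eq_smul {A : Matrix ι ι ℂ} (hA : A.PosSemidef) {e : ι → ℂ}
    (he : ∑ i, Complex.normSq (e i) = 1) {c : ℝ} (hc : A *ᵥ e = (c : ℂ) • e) : 0 ≤ c := by
  have := hA.dotProduct_mulVec_nonneg e
  rwa [hc, dotProduct_smul, star_dotProduct_self_eq_sum_normSq, he, Complex.ofReal_one,
    smul_eq_mul, mul_one, Complex.zero_le_real] at this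

theorem IsHermitian.transpose_mulVec_star {A : Matrix ι ι ℂ} (hA : A.IsHermitian) {e : ι → ℂ}
    {c : ℝ} (hc : A *ᵥ e = (c : ℂ) • e) : Aᵀ *ᵥ star e = (c : ℂ) • star e := by
  rw [mulVec_transpose, ← hA.eq, ← star_mulVec, hc, star_smul, Complex.star_def,
    Complex.conj_ofReal]

theorem re_star_dotProduct_mulVec_le [DecidableEq ι] {A : Matrix ι ι ℂ} {c : ℝ}
    (hA : ((c : ℂ) • 1 - A).PosSemidef) (v : ι → ℂ) :
    (star v ⬝ᵥ A *ᵥ v).re ≤ c * ∑ i, Complex.normSq (v i) := by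
  have := hA.dotProduct_mulVec_nonneg v
  rw [sub_mulVec, smul_mulVec, one_mulVec, dotProduct_sub, dotProduct_smul,
    star_dotProduct_self_eq_sum_normSq, smul_eq_mul, ← Complex.ofReal_mul] at this
  simpa using (Complex.le_def.mp this).1

theorem posSemidef_smul_one_sub_kronecker [DecidableEq ι] [DecidableEq κ] {A : Matrix ι ι ℂ}
    {B : Matrix κ κ ℂ} {a b : ℝ} (ha : 0 ≤ a) (hA : ((a : ℂ) • 1 - A).PosSemidef)
    (hB : B.PosSemidef) (hB' : ((b : ℂ) • 1 - B).PosSemidef) :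
    (((a * b : ℝ) : ℂ) • 1 - A ⊗ₖ B).PosSemidef := by
  have hdecomp : ((a * b : ℝ) : ℂ) • 1 - A ⊗ₖ B =
      ((a : ℂ) • 1 - A) ⊗ₖ B + ((a : ℂ) • 1) ⊗ₖ ((b : ℂ) • 1 - B) := by
    ext ⟨i, k⟩ ⟨i', k'⟩
    by_cases hi : i = i' <;> by_cases hk : k = k' <;> simp [hi, hk] <;> ring
  rw [hdecomp]
  exact (hA.kronecker hB).add ((PosSemidef.one.smul (Complex.zero_le_real.mpr ha)).kronecker hB')

theorem kronecker_mulVec_mul (A : Matrix ι ι ℂ) (B : Matrix κ κ ℂ) (x : ι → ℂ) (y : κ → ℂ) :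
    (A ⊗ₖ B) *ᵥ (fun p => x p.1 * y p.2) = fun p => (A *ᵥ x) p.1 * (B *ᵥ y) p.2 := by
  ext ⟨i, k⟩
  simp only [mulVec, dotProduct, kroneckerMap_apply, Fintype.sum_prod_type, Finset.sum_mul_sum]
  exact Finset.sum_congr rfl fun _ _ => Finset.sum_congr rfl fun _ _ => by ring

end Matrix

theorem sum_normSq_mul_prod {ι κ : Type*} [Fintype ι] [Fintype κ] (x : ι → ℂ) (y : κ → ℂ) :
    ∑ p : ι × κ, Complex.normSq (x p.1 * y p.2) =
      (∑ i, Complex.normSq (x i)) * ∑ k, Complex.normSq (y k) := by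
  simp only [Complex.normSq_mul, Fintype.sum_prod_type, Finset.sum_mul_sum]

theorem normSq_sum_mul_le {κ : Type*} [Fintype κ] (f g : κ → ℂ) :
    Complex.normSq (∑ j, f j * g j) ≤
      (∑ j, Complex.normSq (f j)) * ∑ j, Complex.normSq (g j) := by
  simp only [← Complex.sq_norm]
  calc ‖∑ j, f j * g j‖ ^ 2 ≤ (∑ j, ‖f j‖ * ‖g j‖) ^ 2 := by
        gcongr
        exact (norm_sum_le _ _).trans_eq (by simp only [norm_mul])
    _ ≤ _ := Finset.sum_mul_sq_le_sq_mul_sq _ _ _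

def contractMiddle {ι κ τ : Type*} [Fintype κ] (μ : ι × κ → ℂ) (ν : κ × τ → ℂ) : ι × τ → ℂ :=
  fun p => ∑ j, μ (p.1, j) * star (ν (j, p.2))

theorem sum_normSq_contractMiddle_le {ι κ τ : Type*} [Fintype ι] [Fintype κ] [Fintype τ]
    (μ : ι × κ → ℂ) (ν : κ × τ → ℂ) :
    ∑ p, Complex.normSq (contractMiddle μ ν p) ≤
      (∑ p, Complex.normSq (μ p)) * ∑ p, Complex.normSq (ν p) := by
  calc ∑ p, Complex.normSq (contractMiddle μ ν p)
      ≤ ∑ p : ι × τ, (∑ j, Complex.normSq (μ (p.1, j))) * ∑ j, Complex.normSq (ν (j, p.2)) :=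
        Finset.sum_le_sum fun p _ => by
          simpa only [contractMiddle, Complex.star_def, Complex.normSq_conj] using
            normSq_sum_mul_le (fun j => μ (p.1, j)) (fun j => star (ν (j, p.2)))
    _ = (∑ i, ∑ j, Complex.normSq (μ (i, j))) * ∑ k, ∑ j, Complex.normSq (ν (j, k)) := by
        rw [Fintype.sum_prod_type, Finset.sum_mul_sum]
    _ = _ := by
        rw [Fintype.sum_prod_type, Fintype.sum_prod_type_right]

theorem contractMiddle_mul_mul {ι κ τ : Type*} [Fintype κ] (x : ι → ℂ) (y : τ → ℂ) {ξ : κ → ℂ}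
    (hξ : ∑ j, Complex.normSq (ξ j) = 1) :
    contractMiddle (fun p => x p.1 * ξ p.2) (fun p => ξ p.1 * y p.2) =
      fun p => x p.1 * (star y) p.2 := by
  ext p
  have : ∑ j, ξ j * star (ξ j) = 1 := by
    simp only [Complex.star_def, Complex.mul_conj, ← Complex.ofReal_sum, hξ, Complex.ofReal_one]
  calc ∑ j, x p.1 * ξ j * star (ξ j * y p.2)
      = x p.1 * star (y p.2) * ∑ j, ξ j * star (ξ j) := by
        rw [Finset.mul_sum]
        exact Finset.sum_congr rfl fun j _ => by rw [star_mul']; ring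
    _ = _ := by rw [this, mul_one, Pi.star_apply]

theorem trace_opA_mul_opB {n₁ n₂ n₃ : ℕ} (μ : Fin n₁ × Fin n₂ → ℂ) (ν : Fin n₂ × Fin n₃ → ℂ)
    (Z : Matrix (Fin n₁) (Fin n₁) ℂ) (Θ : Matrix (Fin n₃) (Fin n₃) ℂ) :
    (opA μ Θ * opB Z ν).trace =
      star (contractMiddle μ ν) ⬝ᵥ (Z ⊗ₖ Θᵀ) *ᵥ contractMiddle μ ν := by
  simp only [trace, diag, mul_apply]
  rw [Finset.sum_comm]
  simp only [opA, opB, of_apply, dotProduct, mulVec, contractMiddle, kroneckerMap_apply,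
    transpose_apply, Pi.star_apply, star_sum, star_mul', star_star, Fintype.sum_prod_type,
    Finset.sum_mul]
  simp only [Finset.mul_sum]
  refine Finset.sum_congr rfl fun d _ => ?_
  rw [Finset.sum_comm]
  refine Finset.sum_congr rfl fun f _ => Finset.sum_congr rfl fun e _ =>
    Finset.sum_congr rfl fun a _ => ?_
  rw [Finset.sum_comm]
  refine Finset.sum_congr rfl fun c _ => Finset.sum_congr rfl fun b _ => ?_
  simp only [starRingEnd_apply]
  ring

theorem stmt8 (n₁ n₂ n₃ : ℕ)
    (Z : Matrix (Fin n₁) (Fin n₁) ℂ) (Θ : Matrix (Fin n₃) (Fin n₃) ℂ)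
    (hZ : Z.PosSemidef) (hΘ : Θ.PosSemidef)
    (zmax tmax : ℝ)
    (e₁ : Fin n₁ → ℂ) (he₁ : ∑ i, Complex.normSq (e₁ i) = 1)
    (he₁eig : Z *ᵥ e₁ = (zmax : ℂ) • e₁)
    (hzmax : ∀ (v : Fin n₁ → ℂ) (c : ℝ), v ≠ 0 → Z *ᵥ v = (c : ℂ) • v → c ≤ zmax)
    (e₃ : Fin n₃ → ℂ) (he₃ : ∑ i, Complex.normSq (e₃ i) = 1)
    (he₃eig : Θ *ᵥ e₃ = (tmax : ℂ) • e₃)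
    (htmax : ∀ (v : Fin n₃ → ℂ) (c : ℝ), v ≠ 0 → Θ *ᵥ v = (c : ℂ) • v → c ≤ tmax) :
    (∀ (μ : Fin n₁ × Fin n₂ → ℂ) (ν : Fin n₂ × Fin n₃ → ℂ),
        ∑ p, Complex.normSq (μ p) = 1 → ∑ p, Complex.normSq (ν p) = 1 →
        ((opA μ Θ * opB Z ν).trace).re ≤ zmax * tmax) ∧
    (∀ ξ : Fin n₂ → ℂ, ∑ j, Complex.normSq (ξ j) = 1 →
        (opA (fun p => e₁ p.1 * ξ p.2) Θ *
          opB Z (fun p => ξ p.1 * e₃ p.2)).trace = ((zmax * tmax : ℝ) : ℂ)) := by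
  have hz0 : 0 ≤ zmax := hZ.nonneg_of_mulVec_eq_smul he₁ he₁eig
  have ht0 : 0 ≤ tmax := hΘ.nonneg_of_mulVec_eq_smul he₃ he₃eig
  have hP : (((zmax * tmax : ℝ) : ℂ) • 1 - Z ⊗ₖ Θᵀ).PosSemidef := by
    refine posSemidef_smul_one_sub_kronecker hz0 (hZ.1.posSemidef_smul_one_sub hzmax)
      hΘ.transpose ?_
    simpa using (hΘ.1.posSemidef_smul_one_sub htmax).transpose
  refine ⟨fun μ ν hμ hν => ?_, fun ξ hξ => ?_⟩
  · calc ((opA μ Θ * opB Z ν).trace).re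
        ≤ zmax * tmax * ∑ p, Complex.normSq (contractMiddle μ ν p) := by
          rw [trace_opA_mul_opB]
          exact re_star_dotProduct_mulVec_le hP _
      _ ≤ zmax * tmax * 1 := by
          gcongr
          simpa [hμ, hν] using sum_normSq_contractMiddle_le μ ν
      _ = zmax * tmax := mul_one _
  · rw [trace_opA_mul_opB, contractMiddle_mul_mul e₁ e₃ hξ, kronecker_mulVec_mul, he₁eig,
      hΘ.1.transpose_mulVec_star he₃eig]
    have hw : (fun p : Fin n₁ × Fin n₃ => ((zmax : ℂ) • e₁) p.1 * ((tmax : ℂ) • star e₃) p.2) =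
        ((zmax * tmax : ℝ) : ℂ) • fun p => e₁ p.1 * (star e₃) p.2 := by
      ext p
      simp only [Pi.smul_apply, smul_eq_mul, Complex.ofReal_mul]
      ring
    rw [hw, dotProduct_smul, star_dotProduct_self_eq_sum_normSq, sum_normSq_mul_prod, he₁]
    simp [Complex.normSq_conj, he₃]
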